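/- arXiv:2604.10785 — 3 statements merged into one kernel-verified Lean document; each statement's English description precedes it below -/
import Mathlib

section
/- Let G be a connected graph on n vertices with chromatic number χ, and fix an optimal χ-coloring with class sizes ℓ1 ≥ ⋯ ≥ ℓχ. Assuming edge-deletion monotonicity of distance Laplacian eigenvalues (deleting an edge from a connected graph, keeping it connected, weakly increases each ordered eigenvalue), the i-th largest distance Laplacian eigenvalue of G satisfies ∂^L_i(G) ≥ n + ℓ1 for all 1 ≤ i ≤ ℓ1 − 1. -/
open Finset

/-- Transmission of a vertex: sum of distances to all vertices. -/
noncomputable def transmission {n : ℕ} (G : SimpleGraph (Fin n)) (v : Fin n) : ℕ :=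
  ∑ u : Fin n, G.dist u v

/-- The distance Laplacian matrix `DL(G) = Tr(G) − D(G)`. -/
noncomputable def distLap {n : ℕ} (G : SimpleGraph (Fin n)) : Matrix (Fin n) (Fin n) ℝ :=
  Matrix.diagonal (fun v => (transmission G v : ℝ)) -
    Matrix.of (fun u v => (G.dist u v : ℝ))

/-- `DLeig G i` is the `i`-th largest distance Laplacian eigenvalue of `G`
(1-indexed, counted with algebraic multiplicity): the eigenvalues are the roots
of the characteristic polynomial of `DL(G)`, sorted in nonincreasing order. -/
noncomputable def DLeig {n : ℕ} (G : SimpleGraph (Fin n)) (i : ℕ) : ℝ :=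
  (((distLap G).charpoly.roots).sort (· ≥ ·)).getD (i - 1) 0

/-! Let `K` be the complete multipartite graph on the colour classes of `C`. Since `G ≤ K` and
every graph between `G` and `K` is connected, deleting the edges of `K` outside `G` one at a
time gives `∂ᵢ(K) ≤ ∂ᵢ(G)`. In `K`, any two vertices `a ≠ b` of a class of size `ℓ` are at
distance 2 and have the same distance to every other vertex, and a vertex of that class has
transmission `n + ℓ - 2`; so `e_a - e_b` is an eigenvector of `DL(K)` for `n + ℓ`. Fixing `a`,
these give `ℓ - 1` independent eigenvectors, and since geometric multiplicity is at most
algebraic multiplicity, the `ℓ - 1` largest eigenvalues of `DL(K)` are at least `n + ℓ`. -/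

theorem List.le_getD_of_lt_countP {α : Type*} [LinearOrder α] {μ : α} (d : α) :
    ∀ {l : List α}, l.Pairwise (· ≥ ·) → ∀ {i : ℕ}, i < l.countP (μ ≤ ·) →
      μ ≤ l.getD i d
  | [], _, _, hi => by simp at hi
  | a :: t, hl, 0, hi => by
    by_contra! ha
    have : (a :: t).countP (μ ≤ ·) = 0 := by
      refine List.countP_eq_zero.mpr fun x hx => ?_
      rcases List.mem_cons.mp hx with rfl | hx
      · simpa using ha
      · simpa using ((List.rel_of_pairwise_cons hl hx).trans_lt ha)
    omega
  | a :: t, hl, i + 1, hi => by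
    have : (a :: t).countP (μ ≤ ·) ≤ t.countP (μ ≤ ·) + 1 := by
      rw [List.countP_cons]; split <;> omega
    exact List.le_getD_of_lt_countP d hl.of_cons (i := i) (by omega)

namespace Matrix

variable {ι κ K : Type*} [Fintype ι] [Fintype κ] [DecidableEq κ] [Field K]

theorem card_le_finrank_eigenspace {A : Matrix κ κ K} {μ : K} {v : ι → κ → K}
    (hv : LinearIndependent K v) (hAv : ∀ j, A *ᵥ v j = μ • v j) :
    Fintype.card ι ≤ Module.finrank K (Module.End.eigenspace (toLin' A) μ) := by
  have hspan : Submodule.span K (Set.range v) ≤ Module.End.eigenspace (toLin' A) μ :=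
    Submodule.span_le.mpr <| Set.range_subset_iff.mpr fun j =>
      Module.End.mem_eigenspace_iff.mpr (by simpa using hAv j)
  calc Fintype.card ι = Module.finrank K (Submodule.span K (Set.range v)) :=
        (finrank_span_eq_card hv).symm
    _ ≤ _ := Submodule.finrank_mono hspan

theorem le_getD_sort_roots_charpoly [LinearOrder K] {A : Matrix κ κ K} {μ : K} {v : ι → κ → K}
    (hv : LinearIndependent K v) (hAv : ∀ j, A *ᵥ v j = μ • v j) {i : ℕ}
    (hi : i < Fintype.card ι) : μ ≤ (A.charpoly.roots.sort (· ≥ ·)).getD i 0 := by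
  refine List.le_getD_of_lt_countP 0 (Multiset.pairwise_sort _ _) ?_
  have hmult : Fintype.card ι ≤ A.charpoly.roots.count μ := by
    rw [Polynomial.count_roots, ← charpoly_toLin']
    exact (card_le_finrank_eigenspace hv hAv).trans
      (LinearMap.finrank_eigenspace_le (toLin' A) μ)
  have hcount : A.charpoly.roots.count μ = (A.charpoly.roots.sort (· ≥ ·)).count μ := by
    conv_lhs => rw [← Multiset.sort_eq A.charpoly.roots (· ≥ ·)]
    exact Multiset.coe_count _ _
  have hle : (A.charpoly.roots.sort (· ≥ ·)).count μ ≤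
      (A.charpoly.roots.sort (· ≥ ·)).countP (μ ≤ ·) :=
    List.countP_mono_left fun x _ hx => by simp_all
  omega

end Matrix

theorem SimpleGraph.Connected.apply_le_of_le_of_deleteEdges {V β : Type*} [Finite V]
    [Preorder β] (F : SimpleGraph V → β)
    (hF : ∀ H e, H.Connected → e ∈ H.edgeSet → (H.deleteEdges {e}).Connected →
      F H ≤ F (H.deleteEdges {e}))
    {G H : SimpleGraph V} (hG : G.Connected) (hGH : G ≤ H) : F H ≤ F G := by
  classical
  have : Fintype V := Fintype.ofFinite V
  suffices ∀ s : Finset (Sym2 V), ∀ H, G ≤ H → H.edgeSet \ G.edgeSet ⊆ s → F H ≤ F G from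
    this (H.edgeSet \ G.edgeSet).toFinset H hGH (by simp)
  intro s
  induction s using Finset.induction_on with
  | empty =>
    intro H hGH hs
    have hHG : H ≤ G := edgeSet_subset_edgeSet.mp (Set.sdiff_eq_empty.mp (by simpa using hs))
    rw [le_antisymm hHG hGH]
  | insert e s he ih =>
    intro H hGH hs
    by_cases heH : e ∈ H.edgeSet \ G.edgeSet
    · have hGH' : G ≤ H.deleteEdges {e} := by
        rw [← edgeSet_subset_edgeSet, edgeSet_deleteEdges]
        exact Set.subset_sdiff_singleton (edgeSet_subset_edgeSet.mpr hGH) heH.2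
      refine (hF H e (hG.mono hGH) heH.1 (hG.mono hGH')).trans (ih _ hGH' ?_)
      rintro x ⟨hxH, hxG⟩
      rw [edgeSet_deleteEdges] at hxH
      have hxe : x ≠ e := by simpa using hxH.2
      simpa [hxe] using hs ⟨hxH.1, hxG⟩
    · refine ih H hGH fun x hx => ?_
      have := hs hx
      rw [coe_insert, Set.mem_insert_iff] at this
      exact this.resolve_left (by rintro rfl; exact heH hx)

-- `(⊤ : SimpleGraph α).comap f` is the complete multipartite graph on the fibres of `f`.
theorem SimpleGraph.dist_comap_top {V α : Type*} [DecidableEq α] {f : V → α}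
    (hK : ((⊤ : SimpleGraph α).comap f).Connected) {u v : V} (huv : u ≠ v) :
    ((⊤ : SimpleGraph α).comap f).dist u v = if f u = f v then 2 else 1 := by
  split_ifs with h
  · have : Nontrivial V := ⟨u, v, huv⟩
    obtain ⟨w, hw⟩ := hK.preconnected.exists_adj_of_nontrivial u
    rw [dist, ENat.toNat_eq_iff two_ne_zero]
    refine edist_eq_two_iff.mpr ⟨huv, by simp [h], w, ?_⟩
    simp only [mem_commonNeighbors, comap_adj, top_adj]
    exact ⟨by simpa using hw, by simpa [← h] using hw⟩
  · exact dist_eq_one_iff_adj.mpr (by simpa using h)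

theorem linearIndependent_single_sub_single {ι R : Type*} [DecidableEq ι] [Ring R] {a : ι}
    {s : Set ι} (ha : a ∉ s) :
    LinearIndependent R (fun b : s => (Pi.single a 1 - Pi.single (b : ι) 1 : ι → R)) := by
  rw [linearIndependent_iff']
  intro t g hg b hb
  have hb' := congrFun hg b
  have hba : (b : ι) ≠ a := fun h => ha (h ▸ b.2)
  simp only [Finset.sum_apply, Pi.smul_apply, Pi.sub_apply, Pi.single_apply, hba, smul_eq_mul,
    Pi.zero_apply] at hb'
  simpa [Subtype.coe_inj, hb] using hb'

theorem transmission_eq_of_twins {n : ℕ} {G : SimpleGraph (Fin n)} {a b : Fin n}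
    (htwin : ∀ w, w ≠ a → w ≠ b → G.dist w a = G.dist w b) :
    transmission G a = transmission G b := by
  rw [transmission, transmission, ← Equiv.sum_comp (Equiv.swap a b) (G.dist · b)]
  refine sum_congr rfl fun w _ => ?_
  rcases eq_or_ne w a with rfl | hwa
  · simp
  rcases eq_or_ne w b with rfl | hwb
  · simp [SimpleGraph.dist_comm]
  · rw [Equiv.swap_apply_of_ne_of_ne hwa hwb, htwin w hwa hwb]

open Matrix in
theorem distLap_mulVec_single_sub_single {n : ℕ} {G : SimpleGraph (Fin n)} {a b : Fin n}
    (hab : a ≠ b) (htwin : ∀ w, w ≠ a → w ≠ b → G.dist w a = G.dist w b) :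
    distLap G *ᵥ (Pi.single a 1 - Pi.single b 1) =
      ((transmission G a : ℝ) + G.dist a b) • (Pi.single a 1 - Pi.single b 1) := by
  have htr := transmission_eq_of_twins htwin
  ext w
  simp only [Matrix.mulVec_sub, Matrix.mulVec_single_one, distLap, Pi.sub_apply, Pi.smul_apply,
    Matrix.col_apply, Matrix.sub_apply, Matrix.diagonal_apply, Matrix.of_apply, Pi.single_apply,
    smul_eq_mul]
  rcases eq_or_ne w a with rfl | hwa
  · simp [hab, SimpleGraph.dist_comm]
  rcases eq_or_ne w b with rfl | hwb
  · simp [hwa, htr, SimpleGraph.dist_comm]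
    ring
  · simp [hwa, hwb, htwin w hwa hwb]

theorem transmission_comap_top_add_two {n : ℕ} {α : Type*} [DecidableEq α] {f : Fin n → α}
    (hK : ((⊤ : SimpleGraph α).comap f).Connected) (v : Fin n) :
    transmission ((⊤ : SimpleGraph α).comap f) v + 2 = n + #{w | f w = f v} := by
  have hterm : ∀ w, ((⊤ : SimpleGraph α).comap f).dist w v + (if w = v then 2 else 0) =
      if f w = f v then 2 else 1 := by
    intro w
    rcases eq_or_ne w v with rfl | hwv
    · simp
    · simp [hwv, SimpleGraph.dist_comap_top hK hwv]
  calc transmission ((⊤ : SimpleGraph α).comap f) v + 2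
      = ∑ w, (((⊤ : SimpleGraph α).comap f).dist w v + if w = v then 2 else 0) := by
        simp [transmission, sum_add_distrib]
    _ = ∑ w, if f w = f v then 2 else 1 := sum_congr rfl fun w _ => hterm w
    _ = n + #{w | f w = f v} := by
        have := card_filter_add_card_filter_not (s := univ) (fun w => f w = f v)
        simp only [card_univ, Fintype.card_fin] at this
        simp [sum_ite]
        omega

theorem add_card_le_DLeig_comap_top {n : ℕ} {α : Type*} [DecidableEq α] {f : Fin n → α}
    (hK : ((⊤ : SimpleGraph α).comap f).Connected) (a : Fin n) {i : ℕ} (hi1 : 1 ≤ i)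
    (hi : i ≤ #{w | f w = f a} - 1) :
    (n : ℝ) + #{w | f w = f a} ≤ DLeig ((⊤ : SimpleGraph α).comap f) i := by
  set K := (⊤ : SimpleGraph α).comap f
  set s := ({w | f w = f a} : Finset (Fin n)).erase a
  have hv := linearIndependent_single_sub_single (R := ℝ) (s := (s : Set (Fin n)))
    (notMem_erase a _)
  rw [DLeig]
  refine Matrix.le_getD_sort_roots_charpoly hv (fun ⟨b, hb⟩ => ?_) ?_
  · obtain ⟨hfb, hba⟩ : f b = f a ∧ b ≠ a := by simpa [s] using hb
    have htwin : ∀ w, w ≠ a → w ≠ b → K.dist w a = K.dist w b := fun w hwa hwb => by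
      rw [SimpleGraph.dist_comap_top hK hwa, SimpleGraph.dist_comap_top hK hwb, hfb]
    rw [distLap_mulVec_single_sub_single hba.symm htwin, SimpleGraph.dist_comap_top hK hba.symm,
      if_pos hfb.symm]
    congr 1
    exact_mod_cast transmission_comap_top_add_two hK a
  · simp only [coe_sort_coe, Fintype.card_coe, s]
    rw [card_erase_of_mem (by simp)]
    omega

theorem stmt5_general {n χ : ℕ} (hχpos : 0 < χ) (G : SimpleGraph (Fin n)) (hG : G.Connected)
    (C : G.Coloring (Fin χ))
    (ℓ : Fin χ → ℕ) (hsize : ∀ j, (Finset.univ.filter (fun v => C v = j)).card = ℓ j)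
    (hmono : ∀ (H : SimpleGraph (Fin n)) (e : Sym2 (Fin n)), H.Connected →
      e ∈ H.edgeSet → (H.deleteEdges {e}).Connected →
      ∀ i, DLeig H i ≤ DLeig (H.deleteEdges {e}) i) :
    ∀ i : ℕ, 1 ≤ i → i ≤ ℓ ⟨0, hχpos⟩ - 1 →
      (n : ℝ) + (ℓ ⟨0, hχpos⟩ : ℝ) ≤ DLeig G i := by
  intro i hi1 hi2
  set K := (⊤ : SimpleGraph (Fin χ)).comap C
  have hGK : G ≤ K := C.le_comap
  obtain ⟨a, ha⟩ : ∃ a, C a = ⟨0, hχpos⟩ := by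
    have : 0 < #{v | C v = ⟨0, hχpos⟩} := by rw [hsize]; omega
    simpa [Finset.Nonempty] using card_pos.mp this
  have hclass : #{w | C w = C a} = ℓ ⟨0, hχpos⟩ := by rw [ha]; exact hsize _
  calc (n : ℝ) + ℓ ⟨0, hχpos⟩ ≤ DLeig K i := by
        rw [← hclass]
        exact add_card_le_DLeig_comap_top (hG.mono hGK) a hi1 (hclass ▸ hi2)
    _ ≤ DLeig G i := hG.apply_le_of_le_of_deleteEdges (DLeig · i)
        (fun H e hH he hHe => hmono H e hH he hHe i) hGK

/-- Color-class majorization principle: if `G` is connected with chromatic number `χ`,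
and an optimal `χ`-coloring has class sizes `ℓ 0 ≥ ℓ 1 ≥ ⋯`, then assuming
edge-deletion monotonicity of the ordered distance Laplacian eigenvalues,
`∂ᴸᵢ(G) ≥ n + ℓ₁` for all `1 ≤ i ≤ ℓ₁ − 1`, where `ℓ₁ = ℓ 0` is the largest class size. -/
theorem stmt5 {n χ : ℕ} (hχpos : 0 < χ) (G : SimpleGraph (Fin n)) (hG : G.Connected)
    (hχ : G.chromaticNumber = χ) (C : G.Coloring (Fin χ))
    (ℓ : Fin χ → ℕ) (hsize : ∀ j, (Finset.univ.filter (fun v => C v = j)).card = ℓ j)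
    (hmonoℓ : Antitone ℓ)
    (hmono : ∀ (H : SimpleGraph (Fin n)) (e : Sym2 (Fin n)), H.Connected →
      e ∈ H.edgeSet → (H.deleteEdges {e}).Connected →
      ∀ i, DLeig H i ≤ DLeig (H.deleteEdges {e}) i) :
    ∀ i : ℕ, 1 ≤ i → i ≤ ℓ ⟨0, hχpos⟩ - 1 →
      (n : ℝ) + (ℓ ⟨0, hχpos⟩ : ℝ) ≤ DLeig G i :=
  stmt5_general hχpos G hG C ℓ hsize hmono
end

section
/- Let G be a connected graph on n vertices with chromatic number χ ≤ n − 1, and assume the color-class majorization bound ∂^L_i(G) ≥ n + ℓ1 for 1 ≤ i ≤ ℓ1 − 1 where ℓ1 is the largest class size in an optimal coloring. Then at least ⌈n/χ⌉ − 1 of the distance Laplacian eigenvalues of G are at least b_χ = n + ⌈n/χ⌉; equivalently, the number of eigenvalues lying in [0, b_χ) is at most n − ⌈n/χ⌉ + 1. -/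
open Finset

/-- At least `⌈n/χ⌉ − 1` distance Laplacian eigenvalues are `≥ b_χ = n + ⌈n/χ⌉`;
equivalently at most `n − ⌈n/χ⌉ + 1` eigenvalues lie in `[0, b_χ)`.  Here
`⌈n/χ⌉ = (n + χ - 1) / χ` in natural arithmetic, `ℓ₁` is the largest class size of
an optimal coloring, and the color-class majorization bound is assumed. -/
theorem stmt7 {n χ : ℕ} (hχpos : 0 < χ) (hχn : χ ≤ n - 1)
    (G : SimpleGraph (Fin n)) (hG : G.Connected)
    (hχ : G.chromaticNumber = χ) (C : G.Coloring (Fin χ)) (ℓ₁ : ℕ)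
    (hub : ∀ j : Fin χ, (Finset.univ.filter (fun v => C v = j)).card ≤ ℓ₁)
    (hatt : ∃ j : Fin χ, (Finset.univ.filter (fun v => C v = j)).card = ℓ₁)
    (hmaj : ∀ i : ℕ, 1 ≤ i → i ≤ ℓ₁ - 1 → (n : ℝ) + (ℓ₁ : ℝ) ≤ DLeig G i) :
    (n + χ - 1) / χ - 1 ≤
        ((Finset.Icc 1 n).filter
          (fun i => (n : ℝ) + (((n + χ - 1) / χ : ℕ) : ℝ) ≤ DLeig G i)).card ∧
      ((Finset.Icc 1 n).filter
          (fun i => DLeig G i < (n : ℝ) + (((n + χ - 1) / χ : ℕ) : ℝ))).card ≤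
        n - (n + χ - 1) / χ + 1 := by
  set k := (n + χ - 1) / χ with hk
  obtain ⟨j₀, hj₀⟩ := hatt
  have hℓn : ℓ₁ ≤ n := by
    rw [← hj₀]
    exact (Finset.card_filter_le _ _).trans (by simp)
  have hsum : ∑ j : Fin χ, (Finset.univ.filter (fun v => C v = j)).card = n := by
    rw [← Finset.card_eq_sum_card_fiberwise (fun x _ => Finset.mem_univ (C x))]
    simp
  have hnχ : n ≤ χ * ℓ₁ := by
    calc n = ∑ j : Fin χ, (Finset.univ.filter (fun v => C v = j)).card := hsum.symm
    _ ≤ ∑ _j : Fin χ, ℓ₁ := Finset.sum_le_sum (fun j _ => hub j)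
    _ = χ * ℓ₁ := by simp [mul_comm]
  have hkℓ : k ≤ ℓ₁ := by
    rw [hk, Nat.div_le_iff_le_mul_add_pred hχpos]
    omega
  have hsub : Finset.Icc 1 (k - 1) ⊆
      (Finset.Icc 1 n).filter (fun i => (n : ℝ) + (k : ℝ) ≤ DLeig G i) := by
    intro i hi
    simp only [Finset.mem_Icc] at hi
    refine Finset.mem_filter.mpr ⟨Finset.mem_Icc.mpr ⟨hi.1, by omega⟩, ?_⟩
    have hkr : (k : ℝ) ≤ (ℓ₁ : ℝ) := by exact_mod_cast hkℓ
    linarith [hmaj i hi.1 (by omega)]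
  have hcard1 : k - 1 ≤
      ((Finset.Icc 1 n).filter (fun i => (n : ℝ) + (k : ℝ) ≤ DLeig G i)).card := by
    calc k - 1 = (Finset.Icc 1 (k - 1)).card := by simp
    _ ≤ _ := Finset.card_le_card hsub
  refine ⟨hcard1, ?_⟩
  have hpart := Finset.card_filter_add_card_filter_not
    (s := Finset.Icc 1 n) (p := fun i => (n : ℝ) + (k : ℝ) ≤ DLeig G i)
  simp only [not_le, Nat.card_Icc] at hpart
  have : ((Finset.Icc 1 n).filter (fun i => DLeig G i < (n : ℝ) + (k : ℝ))).card
      ≤ n - k + 1 := by omega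
  exact this
end

section
/- Among all connected graphs G on n vertices with chromatic number χ (2 ≤ χ ≤ n − 1, n ≥ 3), the minimum of the largest distance Laplacian eigenvalue ∂^L_1(G) equals n + ⌈n/χ⌉, and it is attained by any complete χ-partite graph all of whose part sizes lie in {⌊n/χ⌋, ⌈n/χ⌉}. -/
/-!
The distance Laplacian is a weighted Laplacian, `2 xᵀ DL(G) x = ∑ᵤ ∑ᵥ d(u,v) (xᵤ - xᵥ)²`, and
its largest eigenvalue is the maximum of the Rayleigh quotient.

Lower bound: colour `G` with `χ` colours. By pigeonhole some colour class `S` has at least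
`⌈n/χ⌉ ≥ 2` vertices, and for `u ≠ v` in `S` the test vector `eᵤ - eᵥ` has Rayleigh quotient
`(Tr u + Tr v + 2 d(u,v)) / 2 ≥ n + |S|`, since the vertices of `S` are pairwise at distance `≥ 2`.

Upper bound: in a connected complete multipartite graph `d(u,v)` is `1` across parts and `2`
inside a part, so the quadratic form is at most
`∑ᵤ ∑ᵥ (xᵤ - xᵥ)² + ∑_P ∑_{u,v ∈ P} (xᵤ - xᵥ)² ≤ 2 (n + max |P|) ‖x‖²`.
-/

open Finset

open Matrix
open scoped InnerProductSpace

namespace LinearMap.IsSymmetric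

variable {𝕜 E : Type*} [RCLike 𝕜] [NormedAddCommGroup E] [InnerProductSpace 𝕜 E]
  [FiniteDimensional 𝕜 E] {T : E →ₗ[𝕜] E} (hT : T.IsSymmetric) {m : ℕ}
  (hm : Module.finrank 𝕜 E = m)

theorem re_inner_apply_self_le_eigenvalues_zero_mul (h0 : 0 < m) (v : E) :
    RCLike.re ⟪T v, v⟫_𝕜 ≤ hT.eigenvalues hm ⟨0, h0⟩ * ‖v‖ ^ 2 := by
  set b := hT.eigenvectorBasis hm
  have hterm (i : Fin m) : RCLike.re (⟪T v, b i⟫_𝕜 * ⟪b i, v⟫_𝕜) =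
      hT.eigenvalues hm i * ‖⟪b i, v⟫_𝕜‖ ^ 2 := by
    rw [hT v, hT.apply_eigenvectorBasis, inner_smul_right, mul_assoc, RCLike.re_ofReal_mul,
      inner_mul_symm_re_eq_norm, norm_mul, norm_inner_symm, sq]
  rw [← b.sum_inner_mul_inner, map_sum, ← b.sum_sq_norm_inner_right, mul_sum]
  refine sum_le_sum fun i _ => ?_
  rw [hterm]
  exact mul_le_mul_of_nonneg_right (hT.eigenvalues_antitone hm (Nat.zero_le i.val)) (by positivity)

theorem eigenvalues_zero_le_of_forall (h0 : 0 < m) {r : ℝ}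
    (h : ∀ v, RCLike.re ⟪T v, v⟫_𝕜 ≤ r * ‖v‖ ^ 2) : hT.eigenvalues hm ⟨0, h0⟩ ≤ r := by
  have hb := (hT.eigenvectorBasis hm).orthonormal.1 ⟨0, h0⟩
  simpa [hb, inner_smul_left, real_inner_self_eq_norm_sq] using h (hT.eigenvectorBasis hm ⟨0, h0⟩)

end LinearMap.IsSymmetric

namespace Matrix.IsHermitian

variable {ι : Type*} [Fintype ι] [DecidableEq ι] {A : Matrix ι ι ℝ} (hA : A.IsHermitian)
  (h0 : 0 < Fintype.card ι)

theorem getD_sort_roots_charpoly_zero :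
    (A.charpoly.roots.sort (· ≥ ·)).getD 0 0 = hA.eigenvalues₀ ⟨0, h0⟩ := by
  have := hA.sort_roots_charpoly_eq_eigenvalues₀
  simp only [RCLike.re_to_real, Multiset.map_id'] at this
  rw [this, List.getD_eq_getElem _ _ (by simpa using h0), List.getElem_ofFn]

theorem dotProduct_mulVec_le_eigenvalues₀_zero_mul (x : ι → ℝ) :
    x ⬝ᵥ A *ᵥ x ≤ hA.eigenvalues₀ ⟨0, h0⟩ * (x ⬝ᵥ x) := by
  have := (isSymmetric_toEuclideanLin_iff.mpr hA).re_inner_apply_self_le_eigenvalues_zero_mul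
    finrank_euclideanSpace h0 (WithLp.toLp 2 x)
  rw [EuclideanSpace.real_norm_sq_eq] at this
  simp only [dotProduct, sq] at this ⊢
  exact this

theorem eigenvalues₀_zero_le_of_forall {r : ℝ} (h : ∀ x, x ⬝ᵥ A *ᵥ x ≤ r * (x ⬝ᵥ x)) :
    hA.eigenvalues₀ ⟨0, h0⟩ ≤ r := by
  refine (isSymmetric_toEuclideanLin_iff.mpr hA).eigenvalues_zero_le_of_forall
    finrank_euclideanSpace h0 fun v => ?_
  rw [EuclideanSpace.real_norm_sq_eq]
  simp only [sq]
  exact h v.ofLp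

end Matrix.IsHermitian

theorem Matrix.single_sub_single_dotProduct_mulVec {ι R : Type*} [Fintype ι] [DecidableEq ι]
    [CommRing R] (M : Matrix ι ι R) (u v : ι) :
    (Pi.single u 1 - Pi.single v 1) ⬝ᵥ M *ᵥ (Pi.single u 1 - Pi.single v 1) =
      M u u - M u v - M v u + M v v := by
  simp only [mulVec_sub, mulVec_single_one, sub_dotProduct, single_dotProduct, Pi.sub_apply,
    col_apply, one_mul]
  ring

theorem Finset.sum_sum_sub_sq_le {ι : Type*} (s : Finset ι) (x : ι → ℝ) :
    ∑ a ∈ s, ∑ b ∈ s, (x a - x b) ^ 2 ≤ 2 * #s * ∑ a ∈ s, x a ^ 2 := by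
  have h : ∑ a ∈ s, ∑ b ∈ s, (x a - x b) ^ 2 =
      2 * #s * ∑ a ∈ s, x a ^ 2 - 2 * (∑ a ∈ s, x a) ^ 2 := by
    simp only [sub_sq, sum_add_distrib, sum_sub_distrib, sum_const, nsmul_eq_mul, ← mul_sum,
      ← sum_mul]
    ring
  linarith [sq_nonneg (∑ a ∈ s, x a)]

theorem Finset.sum_sum_ite_sub_sq_le {ι κ : Type*} [Fintype ι] [DecidableEq κ] (f : ι → κ)
    {s : ℕ} (hs : ∀ c, #{a | f a = c} ≤ s) (x : ι → ℝ) :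
    ∑ a, ∑ b, (if f a = f b then (x a - x b) ^ 2 else 0) ≤ 2 * s * ∑ a, x a ^ 2 := by
  have hmaps : ∀ a ∈ (univ : Finset ι), f a ∈ univ.image f :=
    fun a _ => mem_image_of_mem f (mem_univ a)
  calc ∑ a, ∑ b, (if f a = f b then (x a - x b) ^ 2 else 0)
      = ∑ c ∈ univ.image f, ∑ a with f a = c, ∑ b with f b = c, (x a - x b) ^ 2 := by
        rw [← sum_fiberwise_of_maps_to hmaps]
        refine sum_congr rfl fun c _ => sum_congr rfl fun a ha => ?_
        simp only [sum_filter, (mem_filter.mp ha).2, eq_comm]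
    _ ≤ ∑ c ∈ univ.image f, 2 * s * ∑ a with f a = c, x a ^ 2 := by
        refine sum_le_sum fun c _ => (sum_sum_sub_sq_le _ x).trans ?_
        gcongr
        exact_mod_cast hs c
    _ = 2 * s * ∑ a, x a ^ 2 := by rw [← mul_sum, sum_fiberwise_of_maps_to hmaps]

theorem Fintype.exists_ceil_div_le_card_fiber {α β : Type*} [Fintype α] [Fintype β]
    [DecidableEq β] (f : α → β) (hα : 0 < Fintype.card α) :
    ∃ y, (Fintype.card α + Fintype.card β - 1) / Fintype.card β ≤ #{x | f x = y} := by
  have hβ : 0 < Fintype.card β := Fintype.card_pos_iff.mpr ⟨f (Fintype.card_pos_iff.mp hα).some⟩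
  set k := (Fintype.card α + Fintype.card β - 1) / Fintype.card β
  have hk : k * Fintype.card β ≤ Fintype.card α + Fintype.card β - 1 := Nat.div_mul_le_self _ _
  obtain ⟨y, hy⟩ := Fintype.exists_lt_card_fiber_of_mul_lt_card f (n := k - 1) (by
    rw [Nat.mul_sub_one, mul_comm]
    omega)
  exact ⟨y, by omega⟩

section DistanceLaplacian

variable {n : ℕ} {G : SimpleGraph (Fin n)}

theorem distLap_apply (u v : Fin n) :
    distLap G u v = (if u = v then (transmission G u : ℝ) else 0) - G.dist u v := by
  simp [distLap, diagonal_apply]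

theorem distLap_isHermitian : (distLap G).IsHermitian := by
  refine IsHermitian.ext fun u v => ?_
  rw [star_trivial, distLap_apply, distLap_apply, G.dist_comm]
  by_cases h : u = v
  · subst h; rfl
  · simp [h, Ne.symm h]

theorem two_mul_dotProduct_distLap_mulVec (x : Fin n → ℝ) :
    2 * (x ⬝ᵥ distLap G *ᵥ x) = ∑ u, ∑ v, (G.dist u v : ℝ) * (x u - x v) ^ 2 := by
  have hrow : ∑ u, ∑ v, (G.dist u v : ℝ) * x u ^ 2 = ∑ u, (transmission G u : ℝ) * x u ^ 2 := by
    simp [transmission, G.dist_comm, sum_mul]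
  have hcol : ∑ u, ∑ v, (G.dist u v : ℝ) * x v ^ 2 = ∑ u, (transmission G u : ℝ) * x u ^ 2 := by
    rw [sum_comm, ← hrow]
    simp [G.dist_comm]
  have hquad : x ⬝ᵥ distLap G *ᵥ x =
      ∑ u, (transmission G u : ℝ) * x u ^ 2 - ∑ u, ∑ v, (G.dist u v : ℝ) * (x u * x v) := by
    rw [distLap, sub_mulVec, dotProduct_sub]
    simp only [dotProduct, mulVec_diagonal]
    simp only [mulVec, dotProduct, of_apply, mul_sum]
    congr 1 <;> refine sum_congr rfl fun u _ => ?_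
    · ring
    · exact sum_congr rfl fun v _ => by ring
  have hexpand (u v : Fin n) : (G.dist u v : ℝ) * (x u - x v) ^ 2 =
      G.dist u v * x u ^ 2 + G.dist u v * x v ^ 2 - 2 * (G.dist u v * (x u * x v)) := by ring
  simp only [hexpand, sum_add_distrib, sum_sub_distrib, ← mul_sum, hrow, hcol, hquad]
  ring

theorem DLeig_one_eq (hn : 0 < n) :
    DLeig G 1 = (distLap_isHermitian (G := G)).eigenvalues₀ ⟨0, by simpa using hn⟩ :=
  distLap_isHermitian.getD_sort_roots_charpoly_zero _

theorem dotProduct_distLap_mulVec_le (hn : 0 < n) (x : Fin n → ℝ) :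
    x ⬝ᵥ distLap G *ᵥ x ≤ DLeig G 1 * (x ⬝ᵥ x) := by
  rw [DLeig_one_eq hn]
  exact distLap_isHermitian.dotProduct_mulVec_le_eigenvalues₀_zero_mul _ x

theorem DLeig_one_le_of_forall (hn : 0 < n) {r : ℝ}
    (h : ∀ x, x ⬝ᵥ distLap G *ᵥ x ≤ r * (x ⬝ᵥ x)) : DLeig G 1 ≤ r := by
  rw [DLeig_one_eq hn]
  exact distLap_isHermitian.eigenvalues₀_zero_le_of_forall _ h

theorem transmission_ge_of_isIndepSet (hc : G.Connected) {S : Finset (Fin n)}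
    (hS : G.IsIndepSet S) {u : Fin n} (hu : u ∈ S) :
    (n : ℝ) + #S - 2 ≤ transmission G u := by
  have hdist (w : Fin n) :
      1 + (if w ∈ S then 1 else 0) - 2 * (if w = u then 1 else 0) ≤ (G.dist w u : ℝ) := by
    by_cases hwu : w = u
    · norm_num [hwu, hu]
    by_cases hw : w ∈ S
    · have := hc.one_lt_dist_of_ne_of_not_adj hwu (hS hw hu hwu)
      norm_num [hw, hwu]
      exact_mod_cast this
    · have := hc.pos_dist_of_ne hwu
      norm_num [hw, hwu]
      exact_mod_cast this
  calc (n : ℝ) + #S - 2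
      = ∑ w, (1 + (if w ∈ S then 1 else 0) - 2 * (if w = u then 1 else 0) : ℝ) := by
        simp [sum_add_distrib, sum_sub_distrib]
    _ ≤ transmission G u := by
        rw [transmission, Nat.cast_sum]
        exact sum_le_sum fun w _ => hdist w

theorem add_card_le_DLeig_one_of_isIndepSet (hc : G.Connected) {S : Finset (Fin n)}
    (hS : G.IsIndepSet S) (hS2 : 2 ≤ #S) : (n : ℝ) + #S ≤ DLeig G 1 := by
  obtain ⟨u, hu, v, hv, huv⟩ := one_lt_card.mp hS2
  have hquad := dotProduct_distLap_mulVec_le (G := G) hc.nonempty.some.pos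
    (Pi.single u 1 - Pi.single v 1)
  have hnorm : (Pi.single u 1 - Pi.single v 1 : Fin n → ℝ) ⬝ᵥ (Pi.single u 1 - Pi.single v 1) =
      2 := by
    simp [huv, Ne.symm huv, one_add_one_eq_two]
  rw [single_sub_single_dotProduct_mulVec, hnorm] at hquad
  simp only [distLap_apply, if_neg huv, if_neg (Ne.symm huv), G.dist_self,
    G.dist_comm (u := v)] at hquad
  have htu := transmission_ge_of_isIndepSet hc hS hu
  have htv := transmission_ge_of_isIndepSet hc hS hv
  have hd : (2 : ℝ) ≤ G.dist u v := by
    exact_mod_cast hc.one_lt_dist_of_ne_of_not_adj huv (hS hu hv huv)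
  norm_num at hquad
  linarith

theorem add_ceil_div_le_DLeig_one (hc : G.Connected) {χ : ℕ} (C : G.Coloring (Fin χ))
    (hχn : χ < n) : (n : ℝ) + ((n + χ - 1) / χ : ℕ) ≤ DLeig G 1 := by
  have hχ : 0 < χ := (C ⟨0, by omega⟩).pos
  obtain ⟨c, hcard⟩ := Fintype.exists_ceil_div_le_card_fiber C (by simpa using hχ.trans hχn)
  simp only [Fintype.card_fin] at hcard
  have hindep : G.IsIndepSet ↑({v | C v = c} : Finset (Fin n)) := by
    convert C.isIndepSet_colorClass c
    ext
    simp [SimpleGraph.Coloring.colorClass]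
  have h2 : 2 ≤ (n + χ - 1) / χ := (Nat.le_div_iff_mul_le hχ).mpr (by omega)
  calc (n : ℝ) + ((n + χ - 1) / χ : ℕ) ≤ n + #{v | C v = c} := by gcongr
    _ ≤ DLeig G 1 := add_card_le_DLeig_one_of_isIndepSet hc hindep (h2.trans hcard)

theorem dist_eq_of_adj_iff_ne (hc : G.Connected) {α : Type*} [DecidableEq α] {f : Fin n → α}
    (hadj : ∀ u v, G.Adj u v ↔ f u ≠ f v) {u v : Fin n} (huv : u ≠ v) :
    G.dist u v = if f u = f v then 2 else 1 := by
  split_ifs with hf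
  · have : Nontrivial (Fin n) := ⟨⟨u, v, huv⟩⟩
    obtain ⟨w, huw⟩ := hc.preconnected.exists_adj_of_nontrivial u
    have hwv : G.Adj w v := (hadj w v).mpr (hf ▸ ((hadj u w).mp huw).symm)
    refine le_antisymm ?_ (hc.one_lt_dist_of_ne_of_not_adj huv fun h => (hadj u v).mp h hf)
    simpa using SimpleGraph.dist_le (huw.toWalk.append hwv.toWalk)
  · exact SimpleGraph.dist_eq_one_iff_adj.mpr ((hadj u v).mpr hf)

theorem DLeig_one_le_of_adj_iff_ne (hc : G.Connected) {α : Type*} [DecidableEq α]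
    {f : Fin n → α} (hadj : ∀ u v, G.Adj u v ↔ f u ≠ f v) {s : ℕ}
    (hs : ∀ c, #{v | f v = c} ≤ s) : DLeig G 1 ≤ n + s := by
  refine DLeig_one_le_of_forall hc.nonempty.some.pos fun x => ?_
  have hpair (u v : Fin n) : (G.dist u v : ℝ) * (x u - x v) ^ 2 ≤
      (x u - x v) ^ 2 + if f u = f v then (x u - x v) ^ 2 else 0 := by
    by_cases huv : u = v
    · simp [huv]
    · rw [dist_eq_of_adj_iff_ne hc hadj huv]
      split_ifs <;> push_cast <;> linarith
  have hsplit : ∑ u, ∑ v, (G.dist u v : ℝ) * (x u - x v) ^ 2 ≤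
      ∑ u, ∑ v, (x u - x v) ^ 2 + ∑ u, ∑ v, if f u = f v then (x u - x v) ^ 2 else 0 := by
    rw [← sum_add_distrib]
    exact sum_le_sum fun u _ => (sum_le_sum fun v _ => hpair u v).trans_eq sum_add_distrib
  have hall := sum_sum_sub_sq_le univ x
  simp only [card_univ, Fintype.card_fin] at hall
  have hparts := sum_sum_ite_sub_sq_le f hs x
  have hsq : x ⬝ᵥ x = ∑ u, x u ^ 2 := by simp [dotProduct, sq]
  have hform := two_mul_dotProduct_distLap_mulVec (G := G) x
  rw [hsq]
  linarith

end DistanceLaplacian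

theorem stmt15_general {n χ : ℕ} (hχ2 : 2 ≤ χ) (hχn : χ ≤ n - 1) :
    (∀ G : SimpleGraph (Fin n), G.Connected → G.chromaticNumber = χ →
      (n : ℝ) + (((n + χ - 1) / χ : ℕ) : ℝ) ≤ DLeig G 1) ∧
    (∀ G : SimpleGraph (Fin n), G.Connected → G.chromaticNumber = χ →
      (∃ f : Fin n → Fin χ,
        (∀ u v, G.Adj u v ↔ f u ≠ f v) ∧
        (∀ c : Fin χ, (Finset.univ.filter (fun v => f v = c)).card = n / χ ∨
          (Finset.univ.filter (fun v => f v = c)).card = (n + χ - 1) / χ)) →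
      DLeig G 1 = (n : ℝ) + (((n + χ - 1) / χ : ℕ) : ℝ)) := by
  have hχn' : χ < n := by omega
  have lower (G : SimpleGraph (Fin n)) (hc : G.Connected) (hG : G.chromaticNumber = χ) :
      (n : ℝ) + ((n + χ - 1) / χ : ℕ) ≤ DLeig G 1 :=
    add_ceil_div_le_DLeig_one hc (SimpleGraph.chromaticNumber_le_iff_colorable.mp hG.le).some hχn'
  refine ⟨lower, fun G hc hG ⟨f, hadj, hcard⟩ => le_antisymm ?_ (lower G hc hG)⟩
  refine DLeig_one_le_of_adj_iff_ne hc hadj fun c => ?_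
  have : n / χ ≤ (n + χ - 1) / χ := Nat.div_le_div_right (by omega)
  rcases hcard c with h | h <;> omega

/-- Among all connected graphs on `n ≥ 3` vertices with chromatic number `χ`
(`2 ≤ χ ≤ n − 1`), the minimum of the largest distance Laplacian eigenvalue is
`n + ⌈n/χ⌉`, and it is attained by every complete `χ`-partite graph all of whose
part sizes lie in `{⌊n/χ⌋, ⌈n/χ⌉}`.  Here `⌈n/χ⌉ = (n + χ - 1) / χ`. -/
theorem stmt15 {n χ : ℕ} (hn : 3 ≤ n) (hχ2 : 2 ≤ χ) (hχn : χ ≤ n - 1) :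
    (∀ G : SimpleGraph (Fin n), G.Connected → G.chromaticNumber = χ →
      (n : ℝ) + (((n + χ - 1) / χ : ℕ) : ℝ) ≤ DLeig G 1) ∧
    (∀ G : SimpleGraph (Fin n), G.Connected → G.chromaticNumber = χ →
      (∃ f : Fin n → Fin χ,
        (∀ u v, G.Adj u v ↔ f u ≠ f v) ∧
        (∀ c : Fin χ, (Finset.univ.filter (fun v => f v = c)).card = n / χ ∨
          (Finset.univ.filter (fun v => f v = c)).card = (n + χ - 1) / χ)) →
      DLeig G 1 = (n : ℝ) + (((n + χ - 1) / χ : ℕ) : ℝ)) :=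
  stmt15_general hχ2 hχn
end
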